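/- Let beta(tau) be the Mobius transformation of the matrix [[p, omega],[1, conj(p)]] with p = 2+omega, acting on the upper half plane. Then beta maps [1, theta]^T (i.e. the point with homogeneous coordinates a=1, b=theta, evaluated as (pa + omega b)/(a + conj(p) b)) to 0, maps [1,0]^T to p, maps [0,1]^T to -1/p, and maps the point corresponding to a = 1/(2(4+sqrt 3)), b = xi/(2(4+sqrt 3)) with xi = e^{-pi i/6} to i. -/

import Mathlib

/-!
`ω` is a primitive cube root of unity, so `conj ω = ω²`, `θ = 2ω + 1`, `conj p = 1 - ω` and
`ξ = e^{πi/2} e^{-2πi/3} = iω²`. With these substitutions every claim is a polynomial identity in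
`ω` and `i` modulo `ω² + ω + 1 = 0` and `i² = -1`. The last point is `[1, ξ]ᵀ` up to a nonzero
scalar, and there `ωξ = i` turns the claim into `p + i = i (1 + conj p · ξ)`.
-/

noncomputable section

def ω : ℂ := Complex.exp (2 * Real.pi * Complex.I / 3)

def p : ℂ := 2 + ω

def θ : ℂ := ω - (starRingEnd ℂ) ω

def ξ : ℂ := Complex.exp (-(Real.pi * Complex.I) / 6)

open Complex ComplexConjugate

lemma omega_isPrimitiveRoot : IsPrimitiveRoot ω 3 := by
  simpa [ω] using isPrimitiveRoot_exp 3 (by norm_num)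

lemma omega_sq_add_omega_add_one : ω ^ 2 + ω + 1 = 0 := by
  have h := omega_isPrimitiveRoot.geom_sum_eq_zero (by norm_num)
  simp only [Finset.sum_range_succ, Finset.sum_range_zero, pow_zero, pow_one] at h
  linear_combination h

lemma conj_omega_eq_exp : conj ω = exp (-(2 * Real.pi * I / 3)) := by
  rw [ω, ← exp_conj]
  congr 1
  simp only [map_div₀, map_mul, map_ofNat, conj_ofReal, conj_I]
  ring

lemma conj_omega : conj ω = ω ^ 2 := by
  rw [conj_omega_eq_exp, Complex.exp_neg, ← ω]
  refine inv_eq_of_mul_eq_one_right ?_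
  rw [← pow_succ', omega_isPrimitiveRoot.pow_eq_one]

lemma omega_re : ω.re = -1 / 2 := by
  have h : ((2 * ω.re : ℝ) : ℂ) = -1 := by
    rw [← add_conj, conj_omega]
    linear_combination omega_sq_add_omega_add_one
  have h_re := congrArg re h
  simp only [ofReal_mul, ofReal_ofNat, mul_re, re_ofNat, ofReal_re, im_ofNat, ofReal_im, mul_zero,
    sub_zero, neg_re, one_re] at h_re
  linarith

lemma xi_eq : ξ = I * ω ^ 2 := by
  calc ξ = exp (Real.pi / 2 * I + -(2 * Real.pi * I / 3)) := by rw [ξ]; congr 1; ring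
    _ = I * ω ^ 2 := by
      rw [Complex.exp_add, exp_pi_div_two_mul_I, ← conj_omega_eq_exp, conj_omega]

lemma theta_eq : θ = 2 * ω + 1 := by
  rw [θ, conj_omega]
  linear_combination -omega_sq_add_omega_add_one

lemma conj_p : conj p = 1 - ω := by
  rw [p, map_add, map_ofNat, conj_omega]
  linear_combination omega_sq_add_omega_add_one

lemma p_add_omega_mul_theta : p + ω * θ = 0 := by
  rw [p, theta_eq]
  linear_combination 2 * omega_sq_add_omega_add_one

lemma omega_mul_p : ω * p = -conj p := by
  rw [conj_p, p]
  linear_combination omega_sq_add_omega_add_one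

lemma omega_mul_xi : ω * ξ = I := by
  rw [xi_eq]
  linear_combination I * (ω - 1) * omega_sq_add_omega_add_one

lemma p_add_I_eq : p + I = I * (1 + conj p * ξ) := by
  rw [conj_p, p, xi_eq]
  linear_combination (2 - ω) * omega_sq_add_omega_add_one + (ω ^ 3 - ω ^ 2) * I_sq

lemma p_add_I_ne_zero : p + I ≠ 0 := by
  intro h
  have h_re := congrArg re h
  norm_num [p, omega_re] at h_re

lemma mobius_homogeneous_scale {K : Type*} [Field K] (α β δ z : K) {t : K} (ht : t ≠ 0) :
    (α * t + β * (z * t)) / (t + δ * (z * t)) = (α + β * z) / (1 + δ * z) := by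
  rw [show α * t + β * (z * t) = t * (α + β * z) by ring,
    show t + δ * (z * t) = t * (1 + δ * z) by ring, mul_div_mul_left _ _ ht]

/-- The Möbius transformation `[a,b]ᵀ ↦ (pa + ωb)/(a + conj(p) b)` of the matrix
`β = [[p, ω],[1, conj p]]` maps `[1, θ]ᵀ` to `0`, maps `[1,0]ᵀ` to `p`, maps
`[0,1]ᵀ` to `-1/p`, and maps the point with `a = 1/(2(4+√3))`, `b = ξ·a` to `i`. -/
theorem beta_special_values :
    (p * 1 + ω * θ) / (1 + (starRingEnd ℂ) p * θ) = 0 ∧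
    (p * 1 + ω * 0) / (1 + (starRingEnd ℂ) p * 0) = p ∧
    (p * 0 + ω * 1) / (0 + (starRingEnd ℂ) p * 1) = -1 / p ∧
    (letI a : ℂ := 1 / (2 * (4 + (Real.sqrt 3 : ℂ)));
      (p * a + ω * (ξ * a)) / (a + (starRingEnd ℂ) p * (ξ * a)) = Complex.I) := by
  refine ⟨?_, by simp, ?_, ?_⟩
  · rw [mul_one, p_add_omega_mul_theta, zero_div]
  · have hω : ω ≠ 0 := exp_ne_zero _
    rw [mul_zero, zero_add, zero_add, mul_one, mul_one, ← neg_neg (conj p), ← omega_mul_p,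
      div_neg, div_mul_cancel_left₀ hω, neg_div, one_div]
  · set a : ℂ := 1 / (2 * (4 + (Real.sqrt 3 : ℂ)))
    have ha : a ≠ 0 := by
      have h : (0 : ℝ) < 4 + Real.sqrt 3 := by positivity
      have h' : (4 + Real.sqrt 3 : ℂ) ≠ 0 := by exact_mod_cast h.ne'
      simp [a, h']
    have hD : 1 + conj p * ξ ≠ 0 := right_ne_zero_of_mul (p_add_I_eq ▸ p_add_I_ne_zero)
    rw [mobius_homogeneous_scale _ _ _ _ ha, omega_mul_xi, p_add_I_eq, mul_div_cancel_right₀ _ hD]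

end
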